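/- arXiv:0901.3843 — 2 statements merged into one kernel-verified Lean document; each statement's English description precedes it below -/
import Mathlib

section
/- Let p be a prime and L = ℓ₀ + ℓ₁∂ + … + ℓ_r∂^r a linear differential operator with coefficients ℓ_i ∈ 𝔽_p[x] of degree at most d and ℓ_r ≠ 0. Let A be the companion matrix of L (an r×r matrix over 𝔽_p(x)) and define A₁ = A, A_{k+1} = A_k' + A·A_k, where ' denotes entrywise derivative. Then for every k ≥ 0, the matrix B_k = ℓ_r^k · A_k has all entries in 𝔽_p[x] of degree at most d·k. -/
open Polynomial

/-- Entrywise derivative on rational functions over `ZMod p`: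
`(num/denom)' = (num' * denom - num * denom') / denom^2`. -/
noncomputable def ratDeriv {p : ℕ} [Fact p.Prime] (f : RatFunc (ZMod p)) : RatFunc (ZMod p) :=
  algebraMap (Polynomial (ZMod p)) (RatFunc (ZMod p))
      (derivative f.num * f.denom - f.num * derivative f.denom) /
    algebraMap (Polynomial (ZMod p)) (RatFunc (ZMod p)) (f.denom ^ 2)

/-- Companion matrix of `L = ℓ₀ + ℓ₁ ∂ + ⋯ + ℓ_r ∂^r`. -/
noncomputable def companion (p r : ℕ) [Fact p.Prime] (ℓ : ℕ → Polynomial (ZMod p)) :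
    Matrix (Fin r) (Fin r) (RatFunc (ZMod p)) :=
  fun i j =>
    if (j : ℕ) = r - 1 then
      - algebraMap (Polynomial (ZMod p)) (RatFunc (ZMod p)) (ℓ (i : ℕ)) /
          algebraMap (Polynomial (ZMod p)) (RatFunc (ZMod p)) (ℓ r)
    else if (i : ℕ) = (j : ℕ) + 1 then 1 else 0

/-- The sequence `A₁ = A`, `A_{k+1} = A_k' + A·A_k` (with `A₀ = I`). -/
noncomputable def Aseq {p r : ℕ} [Fact p.Prime]
    (A : Matrix (Fin r) (Fin r) (RatFunc (ZMod p))) :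
    ℕ → Matrix (Fin r) (Fin r) (RatFunc (ZMod p))
  | 0 => 1
  | 1 => A
  | (k + 2) => (Aseq A (k + 1)).map ratDeriv + A * Aseq A (k + 1)

/-- `ratDeriv` computed on an arbitrary representation `a / b`. -/
lemma ratDeriv_div {p : ℕ} [Fact p.Prime] (a b : Polynomial (ZMod p)) (hb : b ≠ 0) :
    ratDeriv (algebraMap (Polynomial (ZMod p)) (RatFunc (ZMod p)) a /
        algebraMap (Polynomial (ZMod p)) (RatFunc (ZMod p)) b) =
      algebraMap (Polynomial (ZMod p)) (RatFunc (ZMod p))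
          (derivative a * b - a * derivative b) /
        algebraMap (Polynomial (ZMod p)) (RatFunc (ZMod p)) (b ^ 2) := by
  set f : RatFunc (ZMod p) := algebraMap _ _ a / algebraMap _ _ b with hf
  have hdne : f.denom ≠ 0 := f.denom_ne_zero
  have hcross : a * f.denom = f.num * b := by
    apply RatFunc.algebraMap_injective (ZMod p)
    rw [map_mul, map_mul]
    rw [← div_eq_div_iff (RatFunc.algebraMap_ne_zero hb)
      (RatFunc.algebraMap_ne_zero hdne), ← hf]
    exact (RatFunc.num_div_denom f).symm
  have hdvd : f.denom ∣ b := by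
    have h2 : f.denom ∣ f.num * b := ⟨a, by linear_combination -hcross⟩
    exact (RatFunc.isCoprime_num_denom f).symm.dvd_of_dvd_mul_left h2
  obtain ⟨c, hc⟩ := hdvd
  have ha : a = f.num * c := by
    apply mul_right_cancel₀ hdne
    rw [hc] at hcross; linear_combination hcross
  unfold ratDeriv
  rw [div_eq_div_iff (RatFunc.algebraMap_ne_zero (pow_ne_zero 2 hdne))
    (RatFunc.algebraMap_ne_zero (pow_ne_zero 2 hb)), ← map_mul, ← map_mul]
  congr 1
  rw [ha, hc]
  simp only [derivative_mul]
  ring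

/-- `ℓ_r` times the companion matrix has polynomial entries of degree at most `d`. -/
lemma companion_poly (p d r : ℕ) [Fact p.Prime] (ℓ : ℕ → Polynomial (ZMod p))
    (hdeg : ∀ i ≤ r, (ℓ i).natDegree ≤ d) (hlr : ℓ r ≠ 0) (i m : Fin r) :
    ∃ c : Polynomial (ZMod p), c.natDegree ≤ d ∧
      algebraMap (Polynomial (ZMod p)) (RatFunc (ZMod p)) (ℓ r) * companion p r ℓ i m
        = algebraMap (Polynomial (ZMod p)) (RatFunc (ZMod p)) c := by
  have hne : algebraMap (Polynomial (ZMod p)) (RatFunc (ZMod p)) (ℓ r) ≠ 0 :=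
    RatFunc.algebraMap_ne_zero hlr
  unfold companion
  by_cases h1 : (m : ℕ) = r - 1
  · refine ⟨-ℓ (i : ℕ), ?_, ?_⟩
    · rw [natDegree_neg]; exact hdeg _ (le_of_lt i.isLt)
    · rw [if_pos h1, map_neg]
      field_simp
  · rw [if_neg h1]
    by_cases h2 : (i : ℕ) = (m : ℕ) + 1
    · exact ⟨ℓ r, hdeg r le_rfl, by rw [if_pos h2, mul_one]⟩
    · exact ⟨0, by simp, by rw [if_neg h2, mul_zero, map_zero]⟩

/-- Uniform (matrix-level) version of the main statement. -/
lemma key (p d r : ℕ) [Fact p.Prime] (ℓ : ℕ → Polynomial (ZMod p))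
    (hdeg : ∀ i ≤ r, (ℓ i).natDegree ≤ d) (hlr : ℓ r ≠ 0) (k : ℕ) :
    ∃ Q : Fin r → Fin r → Polynomial (ZMod p), ∀ i j,
      (Q i j).natDegree ≤ d * k ∧
        algebraMap (Polynomial (ZMod p)) (RatFunc (ZMod p)) (ℓ r ^ k) *
          Aseq (companion p r ℓ) k i j
          = algebraMap (Polynomial (ZMod p)) (RatFunc (ZMod p)) (Q i j) := by
  obtain ⟨Cm, hCm⟩ : ∃ Cm : Fin r → Fin r → Polynomial (ZMod p), ∀ i m,
      (Cm i m).natDegree ≤ d ∧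
      algebraMap (Polynomial (ZMod p)) (RatFunc (ZMod p)) (ℓ r) * companion p r ℓ i m
        = algebraMap (Polynomial (ZMod p)) (RatFunc (ZMod p)) (Cm i m) := by
    choose Cm h1 h2 using companion_poly p d r ℓ hdeg hlr
    exact ⟨Cm, fun i m => ⟨h1 i m, h2 i m⟩⟩
  induction k with
  | zero =>
    refine ⟨fun i j => if i = j then 1 else 0, fun i j => ⟨?_, ?_⟩⟩
    · by_cases h : i = j <;> simp [h]
    · show algebraMap (Polynomial (ZMod p)) (RatFunc (ZMod p)) (ℓ r ^ 0) *
        (1 : Matrix (Fin r) (Fin r) (RatFunc (ZMod p))) i j = _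
      rw [pow_zero, map_one, one_mul, Matrix.one_apply]
      by_cases h : i = j <;> simp [h]
  | succ n ih =>
    cases n with
    | zero =>
      refine ⟨Cm, fun i j => ⟨?_, ?_⟩⟩
      · simpa using (hCm i j).1
      · show algebraMap (Polynomial (ZMod p)) (RatFunc (ZMod p)) (ℓ r ^ 1) *
          companion p r ℓ i j = _
        rw [pow_one]; exact (hCm i j).2
    | succ m =>
      obtain ⟨Q, hQ⟩ := ih
      have hbne : (ℓ r ^ (m + 1)) ≠ 0 := pow_ne_zero _ hlr
      have hbne' : algebraMap (Polynomial (ZMod p)) (RatFunc (ZMod p)) (ℓ r ^ (m+1)) ≠ 0 :=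
        RatFunc.algebraMap_ne_zero hbne
      refine ⟨fun i j =>
        (derivative (Q i j) * ℓ r - Polynomial.C ((m + 1 : ℕ) : ZMod p) * Q i j * derivative (ℓ r))
          + ∑ t, Cm i t * Q t j, fun i j => ⟨?_, ?_⟩⟩
      · have e1 : (derivative (Q i j)).natDegree ≤ d * (m + 1) :=
          le_trans (le_trans (natDegree_derivative_le _) (Nat.sub_le _ _)) (hQ i j).1
        have e2 : (derivative (ℓ r)).natDegree ≤ d :=
          le_trans (le_trans (natDegree_derivative_le _) (Nat.sub_le _ _)) (hdeg r le_rfl)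
        have harith : d * (m + 1 + 1) = d * (m + 1) + d := by ring
        have e4 : (ℓ r).natDegree ≤ d := hdeg r le_rfl
        have e3 : (Polynomial.C ((m + 1 : ℕ) : ZMod p) * Q i j).natDegree ≤ d * (m + 1) :=
          le_trans natDegree_mul_le (by rw [natDegree_C, zero_add]; exact (hQ i j).1)
        refine le_trans (natDegree_add_le _ _) (max_le ?_ ?_)
        · refine le_trans (natDegree_sub_le _ _) (max_le ?_ ?_)
          · refine le_trans (natDegree_mul_le) ?_
            linarith
          · refine le_trans (natDegree_mul_le) ?_
            linarith
        · refine natDegree_sum_le_of_forall_le _ _ (fun t _ => ?_)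
          refine le_trans natDegree_mul_le ?_
          have h1 := (hCm i t).1
          have h2 := (hQ t j).1
          linarith
      · have hAs : Aseq (companion p r ℓ) (m + 2) =
            (Aseq (companion p r ℓ) (m + 1)).map ratDeriv +
              companion p r ℓ * Aseq (companion p r ℓ) (m + 1) := rfl
        rw [hAs, Matrix.add_apply, Matrix.map_apply, Matrix.mul_apply, mul_add]
        have hentry : Aseq (companion p r ℓ) (m + 1) i j =
            algebraMap (Polynomial (ZMod p)) (RatFunc (ZMod p)) (Q i j) /
              algebraMap (Polynomial (ZMod p)) (RatFunc (ZMod p)) (ℓ r ^ (m + 1)) := by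
          rw [eq_div_iff hbne', mul_comm]
          exact (hQ i j).2
        have hder : algebraMap (Polynomial (ZMod p)) (RatFunc (ZMod p)) (ℓ r ^ (m + 2)) *
            ratDeriv (Aseq (companion p r ℓ) (m + 1) i j) =
            algebraMap (Polynomial (ZMod p)) (RatFunc (ZMod p))
              (derivative (Q i j) * ℓ r -
                Polynomial.C ((m + 1 : ℕ) : ZMod p) * Q i j * derivative (ℓ r)) := by
          rw [hentry, ratDeriv_div _ _ hbne, ← mul_div_assoc,
            div_eq_iff (RatFunc.algebraMap_ne_zero (pow_ne_zero 2 hbne)),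
            ← map_mul, ← map_mul]
          congr 1
          rw [derivative_pow]
          simp only [Nat.cast_add, Nat.cast_one, Nat.add_sub_cancel]
          ring
        have hsum : algebraMap (Polynomial (ZMod p)) (RatFunc (ZMod p)) (ℓ r ^ (m + 2)) *
            (∑ t, companion p r ℓ i t * Aseq (companion p r ℓ) (m + 1) t j) =
            algebraMap (Polynomial (ZMod p)) (RatFunc (ZMod p)) (∑ t, Cm i t * Q t j) := by
          rw [Finset.mul_sum, map_sum]
          refine Finset.sum_congr rfl (fun t _ => ?_)
          have : (ℓ r ^ (m + 2)) = ℓ r * ℓ r ^ (m + 1) := by ring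
          rw [this, map_mul, map_mul]
          calc algebraMap (Polynomial (ZMod p)) (RatFunc (ZMod p)) (ℓ r) *
                algebraMap (Polynomial (ZMod p)) (RatFunc (ZMod p)) (ℓ r ^ (m+1)) *
                (companion p r ℓ i t * Aseq (companion p r ℓ) (m + 1) t j)
              = (algebraMap (Polynomial (ZMod p)) (RatFunc (ZMod p)) (ℓ r) *
                  companion p r ℓ i t) *
                (algebraMap (Polynomial (ZMod p)) (RatFunc (ZMod p)) (ℓ r ^ (m+1)) *
                  Aseq (companion p r ℓ) (m + 1) t j) := by ring
            _ = _ := by rw [(hCm i t).2, (hQ t j).2]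
        rw [hder, hsum, ← map_add]

/-- `B_k = ℓ_r^k · A_k` is a polynomial matrix with entries of degree ≤ d·k. -/
theorem stmt0 (p d r : ℕ) [Fact p.Prime] (hr : 0 < r)
    (ℓ : ℕ → Polynomial (ZMod p)) (hdeg : ∀ i ≤ r, (ℓ i).natDegree ≤ d) (hlr : ℓ r ≠ 0)
    (k : ℕ) (i j : Fin r) :
    ∃ q : Polynomial (ZMod p), q.natDegree ≤ d * k ∧
      algebraMap (Polynomial (ZMod p)) (RatFunc (ZMod p)) (ℓ r ^ k) *
        Aseq (companion p r ℓ) k i j =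
      algebraMap (Polynomial (ZMod p)) (RatFunc (ZMod p)) q := by
  obtain ⟨Q, hQ⟩ := key p d r ℓ hdeg hlr k
  exact ⟨Q i j, (hQ i j).1, (hQ i j).2⟩
end

section
/- Let p be a prime and u = b/a ∈ 𝔽_p(x) with a, b ∈ 𝔽_p[x], deg a ≤ d, deg b ≤ d, a(0) ≠ 0. Then a^p · u^{(p-1)} is a polynomial of degree less than d·p. Consequently, the p-th root s = (u^{(p-1)})^{1/p} ∈ 𝔽_p(x) satisfies: a·s is a polynomial of degree less than d. -/
/-!
By the quotient rule, the `k`-th derivative of `b / a` is `c k / a ^ (k + 1)` with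
`c (k + 1) = c k' * a - (k + 1) * a' * c k`, and each step raises the degree by at most
`deg a - 1`, so `deg (c k) + k ≤ (k + 1) * d`. For `k = p - 1` this makes
`a ^ p * u^(p-1) = c (p - 1)` a polynomial of degree `< d * p`. If `s ^ p = u^(p-1)`, then
`(a * s) ^ p = c (p - 1)`, so `a * s` is integral over the integrally closed ring `𝔽_p[x]`,
hence a polynomial `q` with `p * deg q < d * p`.
-/

open Polynomial

namespace Polynomial

variable {R : Type*}

lemma degree_derivative_mul_add_one_le [Semiring R] (f g : R[X]) :
    (derivative f * g).degree + 1 ≤ f.degree + g.degree := by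
  rcases eq_or_ne f 0 with rfl | hf
  · simp
  calc (derivative f * g).degree + 1 ≤ (derivative f).degree + g.degree + 1 := by
        gcongr; exact degree_mul_le _ _
    _ = (derivative f).degree + 1 + g.degree := add_right_comm _ _ _
    _ ≤ f.degree + g.degree := by
        gcongr; exact Nat.WithBot.add_one_le_of_lt (degree_derivative_lt hf)

lemma degree_lt_of_degree_add_le [Semiring R] {f : R[X]} {m n : ℕ} (hm : 0 < m)
    (h : f.degree + m ≤ n) : f.degree < n := by
  rcases eq_or_ne f 0 with rfl | hf
  · exact WithBot.bot_lt_coe n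
  rw [degree_eq_natDegree hf] at h ⊢
  norm_cast at h ⊢
  omega

lemma degree_lt_of_degree_pow_lt [Semiring R] [NoZeroDivisors R] {f : R[X]} {n d : ℕ}
    (h : (f ^ n).degree < (d * n : ℕ)) : f.degree < d := by
  rcases eq_or_ne f 0 with rfl | hf
  · exact WithBot.bot_lt_coe d
  rw [degree_eq_natDegree hf]
  rw [degree_eq_natDegree (pow_ne_zero n hf), natDegree_pow] at h
  norm_cast at h ⊢
  exact Nat.lt_of_mul_lt_mul_right (a := n) (by rwa [mul_comm])

variable [CommRing R]

noncomputable def ratDerivIterNum (a b : R[X]) : ℕ → R[X]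
  | 0 => b
  | k + 1 =>
    derivative (ratDerivIterNum a b k) * a - (k + 1) • (derivative a * ratDerivIterNum a b k)

lemma degree_ratDerivIterNum_add_le {a b : R[X]} {d : ℕ} (ha : a.degree ≤ d)
    (hb : b.degree ≤ d) (k : ℕ) :
    (ratDerivIterNum a b k).degree + k ≤ ((k + 1) * d : ℕ) := by
  induction k with
  | zero => simpa [ratDerivIterNum] using hb
  | succ k ih =>
    set c := ratDerivIterNum a b k
    have hstep : (derivative c * a - (k + 1) • (derivative a * c)).degree + 1 ≤
        c.degree + a.degree := by
      calc _ ≤ max (derivative c * a).degree ((k + 1) • (derivative a * c)).degree + 1 := by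
            gcongr; exact degree_sub_le _ _
        _ ≤ max (derivative c * a).degree (derivative a * c).degree + 1 := by
            gcongr; exact degree_smul_le _ _
        _ = max ((derivative c * a).degree + 1) ((derivative a * c).degree + 1) :=
            (max_add_add_right _ _ _).symm
        _ ≤ c.degree + a.degree :=
            max_le (degree_derivative_mul_add_one_le c a)
              (add_comm a.degree c.degree ▸ degree_derivative_mul_add_one_le a c)
    calc (ratDerivIterNum a b (k + 1)).degree + (k + 1 : ℕ)
        = (derivative c * a - (k + 1) • (derivative a * c)).degree + 1 + k := by
          rw [Nat.cast_succ, add_comm (k : WithBot ℕ), ← add_assoc]; rfl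
      _ ≤ c.degree + k + a.degree := by
          rw [add_right_comm c.degree]; gcongr
      _ ≤ ((k + 1) * d : ℕ) + d := by gcongr
      _ = ((k + 1 + 1) * d : ℕ) := by push_cast; ring

end Polynomial

section ratDeriv

variable {p : ℕ} [Fact p.Prime]

local notation "ι" => algebraMap (ZMod p)[X] (RatFunc (ZMod p))

lemma ratDeriv_div_s10 (n m : (ZMod p)[X]) (hm : m ≠ 0) :
    ratDeriv (ι n / ι m) = ι (derivative n * m - n * derivative m) / ι (m ^ 2) := by
  set f := ι n / ι m
  have hD : f.denom ≠ 0 := f.denom_ne_zero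
  have hcross : f.num * m = n * f.denom := RatFunc.algebraMap_injective (ZMod p) <| by
    rw [map_mul, map_mul, ← div_eq_div_iff (by simpa using hD) (by simpa using hm),
      RatFunc.num_div_denom]
  have hcross' := congrArg derivative hcross
  simp only [derivative_mul] at hcross'
  rw [ratDeriv, div_eq_div_iff (by simpa using hD) (by simpa using hm), ← map_mul, ← map_mul]
  congr 1
  linear_combination (m * f.denom) * hcross' -
    (derivative f.denom * m + derivative m * f.denom) * hcross

lemma ratDeriv_iterate_div (a b : (ZMod p)[X]) (ha : a ≠ 0) (k : ℕ) :
    ratDeriv^[k] (ι b / ι a) = ι (ratDerivIterNum a b k) / ι (a ^ (k + 1)) := by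
  induction k with
  | zero => simp [ratDerivIterNum]
  | succ k ih =>
    rw [Function.iterate_succ_apply', ih, ratDeriv_div_s10 _ _ (pow_ne_zero _ ha),
      div_eq_div_iff (by simpa using ha) (by simpa using ha), ← map_mul, ← map_mul]
    congr 1
    rw [ratDerivIterNum, derivative_pow, C_eq_natCast, nsmul_eq_mul, add_tsub_cancel_right]
    push_cast
    ring

end ratDeriv

/-- for `u = b/a` with `deg a ≤ d`, `deg b ≤ d`, `a(0) ≠ 0`,
the rational function `a^p · u^{(p-1)}` is a polynomial of degree `< d·p`; consequently for
the `p`-th root `s` of `u^{(p-1)}`, the product `a·s` is a polynomial of degree `< d`. -/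
theorem stmt10 (p d : ℕ) [Fact p.Prime] (a b : Polynomial (ZMod p))
    (ha : a.natDegree ≤ d) (hb : b.natDegree ≤ d) (ha0 : a.eval 0 ≠ 0) :
    (∃ q : Polynomial (ZMod p), q.degree < ((d * p : ℕ) : WithBot ℕ) ∧
      algebraMap (Polynomial (ZMod p)) (RatFunc (ZMod p)) (a ^ p) *
        ratDeriv^[p - 1]
          (algebraMap (Polynomial (ZMod p)) (RatFunc (ZMod p)) b /
            algebraMap (Polynomial (ZMod p)) (RatFunc (ZMod p)) a) =
      algebraMap (Polynomial (ZMod p)) (RatFunc (ZMod p)) q) ∧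
    (∀ s : RatFunc (ZMod p),
      s ^ p = ratDeriv^[p - 1]
          (algebraMap (Polynomial (ZMod p)) (RatFunc (ZMod p)) b /
            algebraMap (Polynomial (ZMod p)) (RatFunc (ZMod p)) a) →
      ∃ q : Polynomial (ZMod p), q.degree < (d : WithBot ℕ) ∧
        algebraMap (Polynomial (ZMod p)) (RatFunc (ZMod p)) a * s =
          algebraMap (Polynomial (ZMod p)) (RatFunc (ZMod p)) q) := by
  have hp : p.Prime := Fact.out
  have ha' : a ≠ 0 := fun h => ha0 (by simp [h])
  set c := ratDerivIterNum a b (p - 1)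
  have hc : c.degree < ((d * p : ℕ) : WithBot ℕ) := by
    refine degree_lt_of_degree_add_le (m := p - 1) (by have := hp.two_le; omega) ?_
    simpa [Nat.sub_add_cancel hp.one_le, mul_comm] using degree_ratDerivIterNum_add_le
      (degree_le_of_natDegree_le ha) (degree_le_of_natDegree_le hb) (p - 1)
  have hcancel : algebraMap _ (RatFunc (ZMod p)) (a ^ p) *
      ratDeriv^[p - 1] (algebraMap _ _ b / algebraMap _ _ a) = algebraMap _ _ c := by
    rw [ratDeriv_iterate_div a b ha', Nat.sub_add_cancel hp.one_le,
      mul_div_cancel₀ _ (by simpa using pow_ne_zero p ha')]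
  refine ⟨⟨c, hc, hcancel⟩, fun s hs => ?_⟩
  have hpow : (algebraMap _ (RatFunc (ZMod p)) a * s) ^ p = algebraMap _ _ c := by
    rw [mul_pow, hs, ← map_pow, hcancel]
  obtain ⟨q, hq⟩ := IsIntegrallyClosed.exists_algebraMap_eq_of_isIntegral_pow hp.pos
    (hpow ▸ isIntegral_algebraMap)
  have hqc : q ^ p = c := RatFunc.algebraMap_injective _ (by rw [map_pow, hq, hpow])
  exact ⟨q, degree_lt_of_degree_pow_lt (hqc ▸ hc), hq.symm⟩
end
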